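/- Let F be a finite group, H ≤ Z(F) a central subgroup, and γ: H → U(E) a finite-dimensional unitary representation. Then for every g ∈ F \ H, ‖Ind_H^F γ(g) − 1‖ ≥ √2. -/

import Mathlib

variable {F : Type*} [Group F] [Fintype F]
variable {E : Type*} [NormedAddCommGroup E] [InnerProductSpace ℂ E] [FiniteDimensional ℂ E]

/-- The space of the representation of `F` induced from a representation `γ` of a
subgroup `H`: functions `ξ : F → E` with `ξ(xh) = γ(h⁻¹)(ξ(x))`, viewed as a subspace of
the Hilbert space `⨁_{x ∈ F} E` (with its `ℓ²` inner product). -/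
def indSpace (H : Subgroup F) (γ : H →* (E →L[ℂ] E)) :
    Submodule ℂ (PiLp 2 fun _ : F => E) where
  carrier := {ξ | ∀ (x : F) (h : H), ξ (x * (h : F)) = γ h⁻¹ (ξ x)}
  zero_mem' := fun x h => (map_zero (γ h⁻¹)).symm
  add_mem' := fun {ξ η} hξ hη x h => by
    show ξ (x * (h : F)) + η (x * (h : F)) = γ h⁻¹ (ξ x + η x)
    rw [hξ x h, hη x h, map_add]
  smul_mem' := fun c ξ hξ x h => by
    show c • ξ (x * (h : F)) = γ h⁻¹ (c • ξ x)
    rw [hξ x h, map_smul]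

/-- The representation of `F` induced from the representation `γ` of the subgroup `H`:
`(Ind γ (g) ξ)(x) = ξ(g⁻¹ x)`. -/
noncomputable def indRep (H : Subgroup F) (γ : H →* (E →L[ℂ] E)) (g : F) :
    indSpace H γ →L[ℂ] indSpace H γ :=
  LinearMap.toContinuousLinearMap
    { toFun := fun ξ => ⟨WithLp.toLp 2 (fun x => ξ.1 (g⁻¹ * x)), fun x h => by
        show ξ.1 (g⁻¹ * (x * (h : F))) = γ h⁻¹ (ξ.1 (g⁻¹ * x))
        rw [← mul_assoc]
        exact ξ.2 (g⁻¹ * x) h⟩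
      map_add' := fun ξ η => rfl
      map_smul' := fun c ξ => rfl }

/-!
The vector `ξ` of the induced representation that is supported on `H`, with `ξ(h) = γ(h⁻¹) v`
for a fixed `v ≠ 0`, is moved by `g ∉ H` to a vector supported on the disjoint coset `gH`.
Since `Ind γ (g)` preserves norms, `Ind γ (g) ξ` and `ξ` are orthogonal of equal length, so
`‖(Ind γ (g) - 1) ξ‖ = √2 ‖ξ‖`.
-/

theorem sqrt_two_le_norm_sub_one_of_inner_eq_zero {𝕜 V : Type*} [RCLike 𝕜]
    [NormedAddCommGroup V] [InnerProductSpace 𝕜 V] (T : V →L[𝕜] V) {ξ : V} (hξ : ξ ≠ 0)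
    (hnorm : ‖T ξ‖ = ‖ξ‖) (horth : inner 𝕜 (T ξ) ξ = 0) :
    Real.sqrt 2 ≤ ‖T - 1‖ := by
  have hsq : ‖(T - 1) ξ‖ ^ 2 = (Real.sqrt 2 * ‖ξ‖) ^ 2 := by
    change ‖T ξ - ξ‖ ^ 2 = _
    rw [@norm_sub_sq 𝕜, horth, hnorm, mul_pow, Real.sq_sqrt zero_le_two]
    simp only [map_zero, mul_zero, sub_zero]
    ring
  have hval : ‖(T - 1) ξ‖ = Real.sqrt 2 * ‖ξ‖ :=
    (pow_left_inj₀ (norm_nonneg _) (by positivity) two_ne_zero).mp hsq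
  have hbound := (T - 1).le_opNorm ξ
  rw [hval] at hbound
  exact le_of_mul_le_mul_right hbound (norm_pos_iff.mpr hξ)

namespace indSpace

variable {H : Subgroup F} {γ : H →* (E →L[ℂ] E)}

section

omit [Fintype F] [FiniteDimensional ℂ E]

open Classical in
noncomputable def single (H : Subgroup F) (γ : H →* (E →L[ℂ] E)) (v : E) : indSpace H γ :=
  ⟨WithLp.toLp 2 fun x => if hx : x ∈ H then γ (⟨x, hx⟩ : H)⁻¹ v else 0, fun x h => by
    by_cases hx : x ∈ H
    · have hxh : x * (h : F) ∈ H := H.mul_mem hx h.2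
      have : (⟨x * (h : F), hxh⟩ : H) = ⟨x, hx⟩ * h := rfl
      simp only [dif_pos hx, dif_pos hxh, this, mul_inv_rev, map_mul]
      rfl
    · have hxh : x * (h : F) ∉ H := fun hm => hx (by simpa using H.mul_mem hm (H.inv_mem h.2))
      simp [dif_neg hx, dif_neg hxh]⟩

theorem single_apply_one (v : E) : (single H γ v).1 1 = v := by
  simp only [single, PiLp.toLp_apply, dif_pos H.one_mem]
  change (γ (1 : H)⁻¹) v = v
  simp

theorem single_apply_of_notMem {v : E} {x : F} (hx : x ∉ H) : (single H γ v).1 x = 0 := by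
  simp [single, hx]

theorem single_ne_zero {v : E} (hv : v ≠ 0) : single H γ v ≠ 0 := fun h =>
  hv (by rw [← single_apply_one (H := H) (γ := γ) v, h]; rfl)

end

omit [FiniteDimensional ℂ E]

theorem norm_sq_eq (ξ : indSpace H γ) : ‖ξ‖ ^ 2 = ∑ x, ‖ξ.1 x‖ ^ 2 :=
  PiLp.norm_sq_eq_of_L2 _ ξ.1

theorem inner_eq (ξ η : indSpace H γ) : inner ℂ ξ η = ∑ x, inner ℂ (ξ.1 x) (η.1 x) :=
  PiLp.inner_apply ξ.1 η.1

end indSpace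

variable {H : Subgroup F} {γ : H →* (E →L[ℂ] E)}

theorem indRep_apply (g : F) (ξ : indSpace H γ) (x : F) :
    (indRep H γ g ξ).1 x = ξ.1 (g⁻¹ * x) :=
  rfl

theorem norm_indRep_apply (g : F) (ξ : indSpace H γ) : ‖indRep H γ g ξ‖ = ‖ξ‖ := by
  refine (pow_left_inj₀ (norm_nonneg _) (norm_nonneg _) two_ne_zero).mp ?_
  simp only [indSpace.norm_sq_eq, indRep_apply]
  exact Fintype.sum_equiv (Equiv.mulLeft g⁻¹) _ _ fun _ => rfl

theorem inner_indRep_single_self {g : F} (hg : g ∉ H) (v : E) :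
    inner ℂ (indRep H γ g (indSpace.single H γ v)) (indSpace.single H γ v) = 0 := by
  rw [indSpace.inner_eq]
  refine Finset.sum_eq_zero fun x _ => ?_
  rw [indRep_apply]
  by_cases hx : x ∈ H
  · have hgx : g⁻¹ * x ∉ H := fun hm =>
      hg (by simpa using H.inv_mem (H.mul_mem hm (H.inv_mem hx)))
    rw [indSpace.single_apply_of_notMem hgx, inner_zero_left]
  · rw [indSpace.single_apply_of_notMem hx, inner_zero_right]

theorem indRep_norm_sub_one_ge_sqrt_two_general
    [Nontrivial E] (H : Subgroup F)
    (γ : H →* (E →L[ℂ] E))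
    (g : F) (hg : g ∉ H) :
    Real.sqrt 2 ≤ ‖indRep H γ g - 1‖ := by
  obtain ⟨v, hv⟩ := exists_ne (0 : E)
  exact sqrt_two_le_norm_sub_one_of_inner_eq_zero _ (indSpace.single_ne_zero hv)
    (norm_indRep_apply g _) (inner_indRep_single_self hg v)

/-- Let `F` be a finite group, `H ≤ Z(F)` a central subgroup, and
`γ : H → U(E)` a (nonzero) finite-dimensional unitary representation.  Then for every
`g ∈ F \ H`, `‖Ind_H^F γ(g) − 1‖ ≥ √2`. -/
theorem indRep_norm_sub_one_ge_sqrt_two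
    [Nontrivial E] (H : Subgroup F) (hH : H ≤ Subgroup.center F)
    (γ : H →* (E →L[ℂ] E)) (hγ : ∀ h, γ h ∈ unitary (E →L[ℂ] E))
    (g : F) (hg : g ∉ H) :
    Real.sqrt 2 ≤ ‖indRep H γ g - 1‖ :=
  indRep_norm_sub_one_ge_sqrt_two_general H γ g hg
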